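/- For every k ≥ 1, the function f_k of the lower-bound construction is at distance at least k/4 from every submodular function: for every submodular g : 2^[n_k] → ℝ there exists S with |f_k(S) − g(S)| ≥ k/4. -/

import Mathlib

/-!
Suppose `|f_k - g| < k/4` everywhere. Then `g > k/4` wherever `f_k = k/2`, and `g < k/4` on
every full transversal of the blocks, where `f_k = 0`. Now `f_k = k/2` both at `∅` and at
`X ∪ S_i` for every transversal `X` of the blocks before `S_i`. Submodularity gives
`(|B| - 1) g X + g (X ∪ B) ≤ ∑_{b ∈ B} g (X + b)`, so if `g X > k/4` and `g (X ∪ S_i) > k/4`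
then some `X + b` with `b ∈ S_i` still has `g > k/4`. Growing a transversal greedily from `∅`
in this way produces a full transversal with `g > k/4`, a contradiction.
-/

open Finset Function

variable {α ι : Type*} [DecidableEq α]

def IsSubmodular (g : Finset α → ℝ) : Prop :=
  ∀ A B, g A + g B ≥ g (A ∪ B) + g (A ∩ B)

namespace IsSubmodular

variable {g : Finset α → ℝ}

theorem card_sub_one_mul_add_le_sum_insert (hg : IsSubmodular g) {B X : Finset α}
    (hXB : Disjoint X B) : (#B - 1 : ℝ) * g X + g (X ∪ B) ≤ ∑ b ∈ B, g (insert b X) := by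
  induction B using Finset.induction_on generalizing X with
  | empty => simp
  | @insert a B ha ih =>
    have haX : a ∉ X := disjoint_right.mp hXB (mem_insert_self a B)
    have hunion : insert a X ∪ (X ∪ B) = X ∪ insert a B := by
      rw [insert_union, ← union_assoc, union_self, union_insert]
    have hinter : insert a X ∩ (X ∪ B) = X := by
      rw [insert_inter_of_notMem (by simp [haX, ha]), inter_union_distrib_left, inter_self,
        union_eq_left.mpr inter_subset_left]
    have hstep := hg (insert a X) (X ∪ B)
    rw [hunion, hinter] at hstep
    have hB := ih (disjoint_insert_right.mp hXB).2
    rw [sum_insert ha, card_insert_of_notMem ha]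
    push_cast
    linarith

theorem exists_lt_insert (hg : IsSubmodular g) {B X : Finset α} {c : ℝ} (hXB : Disjoint X B)
    (hB : B.Nonempty) (hX : c < g X) (hXuB : c < g (X ∪ B)) :
    ∃ b ∈ B, c < g (insert b X) := by
  by_contra! hle
  have hsum : ∑ b ∈ B, g (insert b X) ≤ #B * c := by
    simpa using sum_le_sum hle
  have hcard : (1 : ℝ) ≤ #B := by exact_mod_cast hB.card_pos
  nlinarith [hg.card_sub_one_mul_add_le_sum_insert hXB]

end IsSubmodular

variable [DecidableEq ι]

def IsTransversalOn (S : ι → Finset α) (I : Finset ι) (X : Finset α) : Prop :=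
  ∀ j, #(X ∩ S j) = if j ∈ I then 1 else 0

namespace IsTransversalOn

variable {S : ι → Finset α} {I : Finset ι} {X : Finset α} {i : ι}

theorem inter_eq_empty (hX : IsTransversalOn S I X) (hi : i ∉ I) : X ∩ S i = ∅ := by
  simpa [hi] using hX i

theorem insert (hX : IsTransversalOn S I X) (hS : Pairwise (Disjoint on S)) (hi : i ∉ I)
    {b : α} (hb : b ∈ S i) : IsTransversalOn S (insert i I) (insert b X) := by
  intro j
  by_cases hji : j = i
  · subst hji
    simp [insert_inter_of_mem hb, hX.inter_eq_empty hi]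
  · rw [insert_inter_of_notMem (disjoint_left.mp (hS (Ne.symm hji)) hb), hX j]
    simp [hji]

end IsTransversalOn

namespace IsSubmodular

theorem exists_transversal {n : ℕ} {S : Fin n → Finset α} {g : Finset α → ℝ} {c : ℝ}
    (hg : IsSubmodular g) (hS : Pairwise (Disjoint on S)) (hne : ∀ i, (S i).Nonempty)
    (h0 : c < g ∅) (hblock : ∀ i X, IsTransversalOn S (Iio i) X → c < g (X ∪ S i)) :
    ∃ X, IsTransversalOn S univ X ∧ c < g X := by
  suffices ∀ m ≤ n, ∃ X, IsTransversalOn S {j | (j : ℕ) < m} X ∧ c < g X by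
    simpa using this n le_rfl
  intro m
  induction m with
  | zero => exact fun _ => ⟨∅, fun j => by simp, h0⟩
  | succ m ih =>
    intro hm
    obtain ⟨X, hX, hgX⟩ := ih (by omega)
    set i : Fin n := ⟨m, hm⟩
    have hIio : ({j | (j : ℕ) < m} : Finset (Fin n)) = Iio i := by
      ext j; simp [Fin.lt_def, i]
    rw [hIio] at hX
    have hi : i ∉ Iio i := by simp
    obtain ⟨b, hb, hgb⟩ := hg.exists_lt_insert (disjoint_iff_inter_eq_empty.mpr
      (hX.inter_eq_empty hi)) (hne i) hgX (hblock i X hX)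
    refine ⟨insert b X, ?_, hgb⟩
    convert hX.insert hS hi hb using 1
    ext j; simp [i, Fin.le_def]

end IsSubmodular

noncomputable def backboneFn {k : ℕ} (S : Fin k → Finset α) (A : Finset α) : ℝ :=
  if (Finset.univ.filter (fun i => 2 ≤ (A ∩ S i).card)).card ≤ 1 then
    (((Finset.univ.sup (fun i => (A ∩ S i).card) : ℕ) : ℝ)
      + ((Finset.univ.filter (fun i => A ∩ S i = ∅)).card : ℝ)
      - (if A ≠ ∅ then 1 else 0)) / 2
  else
    -((k : ℝ) + 2) ^ A.card

section backboneFn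

variable {k : ℕ} {S : Fin k → Finset α}

theorem backboneFn_empty : backboneFn S ∅ = k / 2 := by
  simp [backboneFn]

theorem backboneFn_of_isTransversalOn_univ (hk : 0 < k) {X : Finset α}
    (hX : IsTransversalOn S univ X) : backboneFn S X = 0 := by
  have hX' : ∀ j, #(X ∩ S j) = 1 := by simpa [IsTransversalOn] using hX
  have : Nonempty (Fin k) := ⟨⟨0, hk⟩⟩
  have hXne : X ≠ ∅ := by
    rintro rfl
    simpa using hX' ⟨0, hk⟩
  have hempty : ∀ j, X ∩ S j ≠ ∅ := fun j h => by simpa [h] using hX' j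
  simp [backboneFn, hX', sup_const univ_nonempty, hempty, hXne]

theorem card_union_block_inter (hS : Pairwise (Disjoint on S)) {i : Fin k} {X : Finset α}
    (hX : IsTransversalOn S (Iio i) X) (j : Fin k) :
    #((X ∪ S i) ∩ S j) = if j < i then 1 else if j = i then #(S i) else 0 := by
  rw [union_inter_distrib_right]
  by_cases hji : j = i
  · subst hji
    simp [hX.inter_eq_empty (by simp : j ∉ Iio j)]
  · rw [disjoint_iff_inter_eq_empty.mp (hS (Ne.symm hji)), union_empty, hX j]
    simp [hji]

theorem backboneFn_union_block (hS : Pairwise (Disjoint on S)) {i : Fin k}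
    (hcard : #(S i) = i + 2) {X : Finset α} (hX : IsTransversalOn S (Iio i) X) :
    backboneFn S (X ∪ S i) = k / 2 := by
  have hprofile := card_union_block_inter hS hX
  rw [hcard] at hprofile
  have hheavy : ({j | 2 ≤ #((X ∪ S i) ∩ S j)} : Finset (Fin k)) = {i} := by
    ext j
    simp only [hprofile, mem_filter, mem_univ, true_and, mem_singleton]
    split_ifs <;> omega
  have hsup : (univ.sup fun j => #((X ∪ S i) ∩ S j)) = i + 2 := by
    refine le_antisymm (Finset.sup_le fun j _ => ?_) ?_
    · rw [hprofile]; split_ifs <;> omega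
    · exact le_sup_of_le (mem_univ i) (by simp [hcard])
  have hzero : ({j | (X ∪ S i) ∩ S j = ∅} : Finset (Fin k)) = Ioi i := by
    ext j
    simp only [← card_eq_zero, hprofile, mem_filter, mem_univ, true_and, mem_Ioi]
    rcases lt_trichotomy j i with h | rfl | h
    · simp [h, lt_asymm h]
    · simp
    · simp [h, lt_asymm h, h.ne']
  rw [backboneFn, hheavy, hsup, hzero]
  have hne : X ∪ S i ≠ ∅ := by
    rw [← nonempty_iff_ne_empty]
    exact (card_pos.mp (by omega)).mono subset_union_right
  have hik : (i : ℕ) + 1 ≤ k := i.isLt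
  rw [if_pos (by simp), if_pos hne, Fin.card_Ioi, Nat.sub_sub, Nat.cast_sub (by omega)]
  push_cast
  ring

end backboneFn

theorem stmt_10_general (k : ℕ) (hk : 1 ≤ k)
    (S : Fin k → Finset (Fin (k * (k + 3) / 2)))
    (hcard : ∀ i, (S i).card = i.val + 2)
    (hdisj : ∀ i j, i ≠ j → Disjoint (S i) (S j))
    (fk : Finset (Fin (k * (k + 3) / 2)) → ℝ)
    (hfk : ∀ A,
      fk A =
        if (Finset.univ.filter (fun i => 2 ≤ (A ∩ S i).card)).card ≤ 1 then
          (((Finset.univ.sup (fun i => (A ∩ S i).card) : ℕ) : ℝ)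
            + ((Finset.univ.filter (fun i => A ∩ S i = ∅)).card : ℝ)
            - (if A ≠ ∅ then 1 else 0)) / 2
        else
          -((k : ℝ) + 2) ^ A.card) :
    ∀ g : Finset (Fin (k * (k + 3) / 2)) → ℝ,
      (∀ A B, g A + g B ≥ g (A ∪ B) + g (A ∩ B)) →
      ∃ A, |fk A - g A| ≥ (k : ℝ) / 4 := by
  intro g hg
  by_contra! hclose
  obtain rfl : fk = backboneFn S := funext hfk
  have hlarge : ∀ A, backboneFn S A = k / 2 → k / 4 < g A := fun A hA => by
    linarith [(abs_lt.mp (hclose A)).2]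
  obtain ⟨X, hX, hgX⟩ := IsSubmodular.exists_transversal hg hdisj
    (fun i => card_pos.mp (by rw [hcard]; omega)) (hlarge ∅ backboneFn_empty)
    (fun i X hX => hlarge _ (backboneFn_union_block hdisj (hcard i) hX))
  have hfar := (abs_lt.mp (hclose X)).1
  rw [backboneFn_of_isTransversalOn_univ hk hX] at hfar
  linarith

theorem stmt_10 (k : ℕ) (hk : 1 ≤ k)
    (S : Fin k → Finset (Fin (k * (k + 3) / 2)))
    (hcard : ∀ i, (S i).card = i.val + 2)
    (hdisj : ∀ i j, i ≠ j → Disjoint (S i) (S j))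
    (hcover : Finset.univ.biUnion S = Finset.univ)
    (fk : Finset (Fin (k * (k + 3) / 2)) → ℝ)
    (hfk : ∀ A,
      fk A =
        if (Finset.univ.filter (fun i => 2 ≤ (A ∩ S i).card)).card ≤ 1 then
          (((Finset.univ.sup (fun i => (A ∩ S i).card) : ℕ) : ℝ)
            + ((Finset.univ.filter (fun i => A ∩ S i = ∅)).card : ℝ)
            - (if A ≠ ∅ then 1 else 0)) / 2
        else
          -((k : ℝ) + 2) ^ A.card) :
    ∀ g : Finset (Fin (k * (k + 3) / 2)) → ℝ,
      (∀ A B, g A + g B ≥ g (A ∪ B) + g (A ∩ B)) →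
      ∃ A, |fk A - g A| ≥ (k : ℝ) / 4 :=
  stmt_10_general k hk S hcard hdisj fk hfk
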